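/- arXiv:math/0202290 — 3 statements merged into one kernel-verified Lean document; each statement's English description precedes it below -/
import Mathlib

section
/- Let A, B : ℕ → Finset ℕ be decreasing sequences of finite sets (A(n+1) ⊆ A(n) and B(n+1) ⊆ B(n) for all n) with (B n).card ≤ (A n).card for every n. Then there exists an injective function f : B(0) → A(0) such that f maps B(n) into A(n) for every n. -/
lemma inj_helper (s t : Finset ℕ) (h : s.card ≤ t.card) :
    ∃ f : ℕ → ℕ, Set.InjOn f (s : Set ℕ) ∧ ∀ x ∈ s, f x ∈ t := by
  obtain ⟨u, hu, hcard⟩ := Finset.exists_subset_card_eq h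
  have e : {x // x ∈ s} ≃ {x // x ∈ u} := s.equivOfCardEq hcard.symm
  refine ⟨fun x => if hx : x ∈ s then (e ⟨x, hx⟩ : ℕ) else 0, ?_, ?_⟩
  · intro a ha b hb hab
    simp only [Finset.mem_coe] at ha hb
    simp only [dif_pos ha, dif_pos hb] at hab
    have := e.injective (Subtype.ext hab)
    exact congrArg Subtype.val this
  · intro x hx
    simp only [dif_pos hx]
    exact hu (e ⟨x, hx⟩).2

lemma aux_chain (A B : ℕ → Finset ℕ)
    (hA : ∀ n, A (n + 1) ⊆ A n) (hB : ∀ n, B (n + 1) ⊆ B n)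
    (hcard : ∀ n, (B n).card ≤ (A n).card) (m : ℕ) :
    ∃ f : ℕ → ℕ, Set.InjOn f (B 0 : Set ℕ) ∧ ∀ n ≤ m, ∀ x ∈ B n, f x ∈ A n := by
  induction m generalizing A B with
  | zero =>
    obtain ⟨f, hf1, hf2⟩ := inj_helper (B 0) (A 0) (hcard 0)
    exact ⟨f, hf1, fun n hn x hx => by simp_all [Nat.le_zero.mp hn]⟩
  | succ m ih =>
    obtain ⟨g, hg1, hg2⟩ := ih (fun n => A (n + 1)) (fun n => B (n + 1))
      (fun n => hA (n + 1)) (fun n => hB (n + 1)) (fun n => hcard (n + 1))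
    -- g is injective on B 1, g '' B (n+1) ⊆ A (n+1) for n ≤ m
    classical
    set S : Finset ℕ := B 0 \ B 1 with hS
    set T : Finset ℕ := A 0 \ (B 1).image g with hT
    have himg : (B 1).image g ⊆ A 0 := by
      intro y hy
      obtain ⟨x, hx, rfl⟩ := Finset.mem_image.mp hy
      exact (hA 0) (hg2 0 (Nat.zero_le m) x hx)
    have hcardimg : ((B 1).image g).card = (B 1).card :=
      Finset.card_image_of_injOn hg1
    have hST : S.card ≤ T.card := by
      have h1 : S.card = (B 0).card - (B 1).card :=
        Finset.card_sdiff_of_subset (hB 0)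
      have h2 : T.card = (A 0).card - (B 1).card := by
        rw [hT, Finset.card_sdiff_of_subset himg, hcardimg]
      rw [h1, h2]
      exact Nat.sub_le_sub_right (hcard 0) _
    obtain ⟨h, hh1, hh2⟩ := inj_helper S T hST
    refine ⟨fun x => if x ∈ B 1 then g x else h x, ?_, ?_⟩
    · intro a ha b hb hab
      simp only [Finset.mem_coe] at ha hb
      by_cases ha1 : a ∈ B 1 <;> by_cases hb1 : b ∈ B 1
      · simp only [if_pos ha1, if_pos hb1] at hab
        exact hg1 ha1 hb1 hab
      · simp only [if_pos ha1, if_neg hb1] at hab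
        exfalso
        have : h b ∈ T := hh2 b (Finset.mem_sdiff.mpr ⟨hb, hb1⟩)
        rw [hT, Finset.mem_sdiff] at this
        exact this.2 (Finset.mem_image.mpr ⟨a, ha1, hab⟩)
      · simp only [if_neg ha1, if_pos hb1] at hab
        exfalso
        have : h a ∈ T := hh2 a (Finset.mem_sdiff.mpr ⟨ha, ha1⟩)
        rw [hT, Finset.mem_sdiff] at this
        exact this.2 (Finset.mem_image.mpr ⟨b, hb1, hab.symm⟩)
      · simp only [if_neg ha1, if_neg hb1] at hab
        exact hh1 (Finset.mem_sdiff.mpr ⟨ha, ha1⟩) (Finset.mem_sdiff.mpr ⟨hb, hb1⟩) hab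
    · intro n hn x hx
      match n with
      | 0 =>
        by_cases hx1 : x ∈ B 1
        · simp only [if_pos hx1]
          exact (hA 0) (hg2 0 (Nat.zero_le m) x hx1)
        · simp only [if_neg hx1]
          have : h x ∈ T := hh2 x (Finset.mem_sdiff.mpr ⟨hx, hx1⟩)
          exact (Finset.mem_sdiff.mp this).1
      | k + 1 =>
        have hx1 : x ∈ B 1 := by
          clear hn
          induction k with
          | zero => exact hx
          | succ j ihj => exact ihj (hB (j + 1) hx)
        simp only [if_pos hx1]
        exact hg2 k (Nat.le_of_succ_le_succ hn) x hx

lemma stabilizes (C : ℕ → Finset ℕ) (hC : ∀ n, C (n + 1) ⊆ C n) :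
    ∃ N, ∀ n, N ≤ n → C n = C N := by
  have hmono : ∀ m n, m ≤ n → C n ⊆ C m := by
    intro m n hmn
    induction hmn with
    | refl => exact Finset.Subset.refl _
    | step _ ih => exact (hC _).trans ih
  have : ∃ c, c ∈ Set.range (fun n => (C n).card) := ⟨(C 0).card, 0, rfl⟩
  obtain ⟨N, hN⟩ := Nat.sInf_mem this
  refine ⟨N, fun n hn => ?_⟩
  have hsub : C n ⊆ C N := hmono N n hn
  have hle : (C N).card ≤ (C n).card := by
    have h2 : sInf (Set.range fun n => (C n).card) ≤ (C n).card := Nat.sInf_le ⟨n, rfl⟩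
    simp only at hN
    omega
  exact (Finset.eq_of_subset_of_card_le hsub hle)

theorem stmt_1 (A B : ℕ → Finset ℕ)
    (hA : ∀ n, A (n + 1) ⊆ A n) (hB : ∀ n, B (n + 1) ⊆ B n)
    (hcard : ∀ n, (B n).card ≤ (A n).card) :
    ∃ f : ℕ → ℕ, Set.InjOn f (B 0 : Set ℕ) ∧ ∀ n, f '' (B n : Set ℕ) ⊆ (A n : Set ℕ) := by
  obtain ⟨NA, hNA⟩ := stabilizes A hA
  obtain ⟨NB, hNB⟩ := stabilizes B hB
  set K := max NA NB with hK
  obtain ⟨f, hf1, hf2⟩ := aux_chain A B hA hB hcard K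
  refine ⟨f, hf1, fun n => ?_⟩
  rintro _ ⟨x, hx, rfl⟩
  by_cases hn : n ≤ K
  · exact hf2 n hn x hx
  · push_neg at hn
    have hnA : A n = A K := by
      rw [hNA n (le_trans (le_max_left _ _) hn.le), hNA K (le_max_left _ _)]
    have hnB : B n = B K := by
      rw [hNB n (le_trans (le_max_right _ _) hn.le), hNB K (le_max_right _ _)]
    rw [hnA]
    rw [hnB] at hx
    exact hf2 K le_rfl x hx
end

section
/- Let E₀ be the equivalence relation on ℕ → Bool defined by x E₀ y iff {n : x n ≠ y n} is finite, and let μ be the fair-coin Bernoulli product measure on ℕ → Bool. If a set G ⊆ (ℕ → Bool) contains at most one element of each E₀-class, then every μ-measurable subset of G has μ-measure zero (i.e., G has inner measure 0). -/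
/-!
Flipping the coordinates in a finite set `s` is a bijection of `ℕ → Bool` that preserves the
fair-coin measure, since it permutes the cylinders over each finite set of coordinates. Such a
flip moves every point inside its `E₀`-class, and distinct `s` move a point to distinct places,
so for `A ⊆ G` the preimages of `A` under the infinitely many flips are pairwise disjoint and all
have measure `μ A`. In a probability space this forces `μ A = 0`.
-/

open MeasureTheory Function

section Cylinders

variable {ι β : Type*}

def pointCylinders : Set (Set (ι → β)) :=
  {C | ∃ (s : Finset ι) (y : ι → β), C = {x | ∀ i ∈ s, x i = y i}}

lemma isPiSystem_pointCylinders : IsPiSystem (pointCylinders : Set (Set (ι → β))) := by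
  classical
  rintro _ ⟨s, y, rfl⟩ _ ⟨t, z, rfl⟩ ⟨w, hwy, hwz⟩
  refine ⟨s ∪ t, w, Set.ext fun x => ?_⟩
  simp only [Set.mem_inter_iff, Set.mem_ofPred_eq, Finset.mem_union]
  constructor
  · rintro ⟨hxy, hxz⟩ i (hi | hi)
    · exact (hxy i hi).trans (hwy i hi).symm
    · exact (hxz i hi).trans (hwz i hi).symm
  · intro hxw
    exact ⟨fun i hi => (hxw i (.inl hi)).trans (hwy i hi),
      fun i hi => (hxw i (.inr hi)).trans (hwz i hi)⟩

variable [MeasurableSpace β] [MeasurableSingletonClass β]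

lemma measurableSet_of_mem_pointCylinders {C : Set (ι → β)} (hC : C ∈ pointCylinders) :
    MeasurableSet C := by
  obtain ⟨s, y, rfl⟩ := hC
  exact MeasurableSet.pi s.countable_toSet fun i _ => measurableSet_singleton (y i)

lemma generateFrom_pointCylinders [Countable β] :
    MeasurableSpace.generateFrom pointCylinders =
      (MeasurableSpace.pi : MeasurableSpace (ι → β)) := by
  refine le_antisymm (MeasurableSpace.generateFrom_le fun C hC =>
    measurableSet_of_mem_pointCylinders hC) (iSup_le fun i => ?_)
  rw [MeasurableSpace.comap_le_iff_le_map]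
  intro t _
  have hfiber : (fun x : ι → β => x i) ⁻¹' t =
      ⋃ b ∈ t, {x | ∀ j ∈ ({i} : Finset ι), x j = b} := by
    ext x; simp
  rw [MeasurableSpace.map_def, hfiber]
  exact MeasurableSet.biUnion t.to_countable fun b _ =>
    MeasurableSpace.measurableSet_generateFrom ⟨{i}, fun _ => b, rfl⟩

lemma MeasureTheory.Measure.ext_of_pointCylinders [Countable β] {μ ν : Measure (ι → β)}
    [IsProbabilityMeasure μ] [IsProbabilityMeasure ν]
    (h : ∀ (s : Finset ι) (y : ι → β),
      μ {x | ∀ i ∈ s, x i = y i} = ν {x | ∀ i ∈ s, x i = y i}) : μ = ν :=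
  ext_of_generate_finite _ generateFrom_pointCylinders.symm isPiSystem_pointCylinders
    (by rintro _ ⟨s, y, rfl⟩; exact h s y) (by simp)

end Cylinders

lemma measure_eq_zero_of_aedisjoint_copies {α ι : Type*} [MeasurableSpace α] {μ : Measure α}
    [IsFiniteMeasure μ] [Infinite ι] {A : Set α} {T : ι → Set α}
    (hT : ∀ i, NullMeasurableSet (T i) μ) (hdisj : Pairwise (AEDisjoint μ on T))
    (hμT : ∀ i, μ (T i) = μ A) : μ A = 0 := by
  by_contra hA
  have hfin := Measure.finite_const_le_meas_of_disjoint_iUnion₀ μ (pos_iff_ne_zero.2 hA) hT hdisj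
    (measure_ne_top μ _)
  simp only [hμT, le_refl, Set.ofPred_true] at hfin
  exact Set.infinite_univ hfin

section Flip

variable {ι : Type*} [DecidableEq ι]

def flipOn (s : Finset ι) (x : ι → Bool) : ι → Bool := fun i => decide (i ∈ s) ^^ x i

lemma measurable_flipOn (s : Finset ι) : Measurable (flipOn s) :=
  measurable_pi_lambda _ fun i => Measurable.of_discrete.comp (measurable_pi_apply i)

lemma flipOn_preimage_pointCylinder (s t : Finset ι) (y : ι → Bool) :
    flipOn s ⁻¹' {x | ∀ i ∈ t, x i = y i} = {x | ∀ i ∈ t, x i = flipOn s y i} := by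
  ext x
  simp only [Set.mem_preimage, Set.mem_ofPred_eq, flipOn]
  exact forall₂_congr fun i _ => by cases decide (i ∈ s) <;> simp

lemma flipOn_left_injective (x : ι → Bool) : Injective (flipOn · x) := by
  intro s t hst
  ext i
  simpa [flipOn, Bool.xor_left_inj] using congrFun hst i

lemma finite_setOf_flipOn_ne (s t : Finset ι) (x : ι → Bool) :
    {i | flipOn s x i ≠ flipOn t x i}.Finite :=
  (s ∪ t).finite_toSet.subset fun i hi => by
    by_contra hst
    simp_all [flipOn]

lemma measurePreserving_flipOn {μ : Measure (ι → Bool)} [IsProbabilityMeasure μ]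
    (hμ : ∀ (s : Finset ι) (y : ι → Bool),
      μ {x | ∀ i ∈ s, x i = y i} = (1 / 2 : ENNReal) ^ s.card) (s : Finset ι) :
    MeasurePreserving (flipOn s) μ μ := by
  have := Measure.isProbabilityMeasure_map (μ := μ) (measurable_flipOn s).aemeasurable
  refine ⟨measurable_flipOn s, Measure.ext_of_pointCylinders fun t y => ?_⟩
  rw [Measure.map_apply (measurable_flipOn s) (measurableSet_of_mem_pointCylinders ⟨t, y, rfl⟩),
    flipOn_preimage_pointCylinder, hμ, hμ]

lemma pairwise_disjoint_preimage_flipOn {G : Set (ι → Bool)}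
    (hG : ∀ x ∈ G, ∀ y ∈ G, {i | x i ≠ y i}.Finite → x = y) :
    Pairwise (Disjoint on fun s : Finset ι => flipOn s ⁻¹' G) := fun s t hst =>
  Set.disjoint_left.2 fun x hs ht =>
    hst (flipOn_left_injective x (hG _ hs _ ht (finite_setOf_flipOn_ne s t x)))

end Flip

/-- If `μ` is the fair-coin Bernoulli product measure on `ℕ → Bool` (characterized by its
values on cylinders) and `G` contains at most one element of each `E₀`-class, then every
`μ`-measurable subset of `G` is `μ`-null. -/
theorem stmt_6 (μ : Measure (ℕ → Bool)) [IsProbabilityMeasure μ]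
    (hμ : ∀ (s : Finset ℕ) (y : ℕ → Bool),
      μ {x : ℕ → Bool | ∀ n ∈ s, x n = y n} = (1 / 2 : ENNReal) ^ s.card)
    (G : Set (ℕ → Bool))
    (hG : ∀ x ∈ G, ∀ y ∈ G, {n : ℕ | x n ≠ y n}.Finite → x = y) :
    ∀ A ⊆ G, NullMeasurableSet A μ → μ A = 0 := by
  intro A hAG hA
  have hflip := measurePreserving_flipOn hμ
  refine measure_eq_zero_of_aedisjoint_copies (T := fun s => flipOn s ⁻¹' A)
    (fun s => hA.preimage (hflip s).quasiMeasurePreserving) (fun s t hst => ?_)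
    (fun s => (hflip s).measure_preimage hA)
  exact ((pairwise_disjoint_preimage_flipOn hG hst).mono (Set.preimage_mono hAG)
    (Set.preimage_mono hAG)).aedisjoint
end

section
/- Let ε > 0 be a real number and let X ⊆ Set.Icc (0:ℝ) 1 be a Lebesgue-measurable set such that for all x, y ∈ X, either |x − y| < ε or |x − y| ≥ 4ε. Then the Lebesgue measure of X is at most 1/4 + ε. -/
open Set MeasureTheory

theorem stmt_9 (ε : ℝ) (hε : 0 < ε) (X : Set ℝ) (hX : X ⊆ Set.Icc (0 : ℝ) 1)
    (hmeas : MeasurableSet X)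
    (hdich : ∀ x ∈ X, ∀ y ∈ X, |x - y| < ε ∨ 4 * ε ≤ |x - y|) :
    MeasureTheory.volume X ≤ ENNReal.ofReal (1 / 4 + ε) := by
  have h4ε : (0:ℝ) < 4 * ε := by linarith
  set S : ℝ → Set ℝ := fun x => {y ∈ X | |x - y| < ε} with hS
  set a : ℝ → ℝ := fun x => sInf (S x) with ha
  have hX0 : ∀ x ∈ X, (0:ℝ) ≤ x := fun x hx => (hX hx).1
  have hX1 : ∀ x ∈ X, x ≤ 1 := fun x hx => (hX hx).2
  have hSbdd : ∀ x, BddBelow (S x) := fun x => ⟨0, fun y hy => hX0 y hy.1⟩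
  have hSmem : ∀ x ∈ X, x ∈ S x := fun x hx => ⟨hx, by simpa using hε⟩
  have ha_le : ∀ x ∈ X, a x ≤ x := fun x hx => csInf_le (hSbdd x) (hSmem x hx)
  have ha_nonneg : ∀ x ∈ X, 0 ≤ a x := fun x hx =>
    le_csInf ⟨x, hSmem x hx⟩ (fun y hy => hX0 y hy.1)
  -- Lemma A: disjoint classes have infima at least 4ε apart
  have keyA : ∀ x ∈ X, ∀ z ∈ X, S x ∩ S z = ∅ → 4 * ε ≤ |a x - a z| := by
    intro x hx z hz hdisj
    have hsep : ∀ u ∈ S x, ∀ v ∈ S z, 4 * ε ≤ |u - v| := by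
      intro u hu v hv
      rcases hdich u hu.1 v hv.1 with h | h
      · exfalso
        have hxv : |x - v| < ε := by
          rcases hdich x hx v hv.1 with h' | h'
          · exact h'
          · exfalso
            have : |x - v| ≤ |x - u| + |u - v| := abs_sub_le _ _ _
            linarith [hu.2]
        have : v ∈ S x ∩ S z := ⟨⟨hv.1, hxv⟩, hv⟩
        rw [hdisj] at this
        exact this
      · exact h
    by_contra hlt
    push_neg at hlt
    set δ : ℝ := (4 * ε - |a x - a z|) / 2 with hδ
    have hδpos : 0 < δ := by
      have := abs_nonneg (a x - a z)
      simp only [hδ]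
      linarith
    obtain ⟨u, hu, hu'⟩ := Real.lt_sInf_add_pos ⟨x, hSmem x hx⟩ hδpos
    obtain ⟨v, hv, hv'⟩ := Real.lt_sInf_add_pos ⟨z, hSmem z hz⟩ hδpos
    have hau : a x ≤ u := csInf_le (hSbdd x) hu
    have hav : a z ≤ v := csInf_le (hSbdd z) hv
    have hu'' : u < a x + δ := hu'
    have hv'' : v < a z + δ := hv'
    have h4 := hsep u hu v hv
    have habs := abs_lt.mp hlt
    have hd1 := le_abs_self (a x - a z)
    have hd2 := neg_abs_le (a x - a z)
    rcases le_abs.mp h4 with h' | h' <;> linarith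
  -- Lemma B
  have keyB : ∀ x ∈ X, ∀ z ∈ X, |a x - a z| < 4 * ε → |x - z| < ε := by
    intro x hx z hz h
    have hne : (S x ∩ S z).Nonempty := by
      rw [Set.nonempty_iff_ne_empty]
      intro h'
      exact absurd h (not_lt.mpr (keyA x hx z hz h'))
    obtain ⟨w, hw1, hw2⟩ := hne
    have h2 : |x - z| < 2 * ε := by
      have : |x - z| ≤ |x - w| + |w - z| := abs_sub_le _ _ _
      have hzw : |w - z| = |z - w| := abs_sub_comm _ _
      linarith [hw1.2, hw2.2, this, hzw ▸ this]
    rcases hdich x hx z hz with h' | h'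
    · exact h'
    · linarith
  -- the covering
  set K := Nat.floor (1 / (4 * ε)) with hK
  set Y : ℕ → Set ℝ := fun k => {x ∈ X | Nat.floor (a x / (4 * ε)) = k} with hY
  set c : ℕ → ℝ := fun k => sInf (Y k) with hc
  have hfloor : ∀ x ∈ X, (↑(Nat.floor (a x / (4 * ε))) : ℝ) ≤ a x / (4 * ε) ∧
      a x / (4 * ε) < Nat.floor (a x / (4 * ε)) + 1 := by
    intro x hx
    have hnn : 0 ≤ a x / (4 * ε) := div_nonneg (ha_nonneg x hx) h4ε.le
    exact ⟨Nat.floor_le hnn, Nat.lt_floor_add_one _⟩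
  have hcover : X ⊆ ⋃ k ∈ Finset.range (K + 1), Icc (c k) (c k + ε) := by
    intro x hx
    set k := Nat.floor (a x / (4 * ε)) with hk
    have hkK : k ≤ K := by
      apply Nat.floor_le_floor
      have h1 : a x ≤ 1 := le_trans (ha_le x hx) (hX1 x hx)
      gcongr
    have hxY : x ∈ Y k := ⟨hx, rfl⟩
    have hYbdd : BddBelow (Y k) := ⟨0, fun y hy => hX0 y hy.1⟩
    have hmem : x ∈ Icc (c k) (c k + ε) := by
      constructor
      · exact csInf_le hYbdd hxY
      · have hlb : x - ε ≤ c k := by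
          apply le_csInf ⟨x, hxY⟩
          intro z hz
          have hzX : z ∈ X := hz.1
          have haz : |a x - a z| < 4 * ε := by
            obtain ⟨hb1, hb2⟩ := hfloor x hx
            obtain ⟨hb1', hb2'⟩ := hfloor z hzX
            rw [← hk] at hb1 hb2
            rw [hz.2] at hb1' hb2'
            have e1 : (k : ℝ) * (4 * ε) ≤ a x := (le_div_iff₀ h4ε).mp hb1
            have e2 : a x < ((k : ℝ) + 1) * (4 * ε) := (div_lt_iff₀ h4ε).mp hb2
            have e3 : (k : ℝ) * (4 * ε) ≤ a z := (le_div_iff₀ h4ε).mp hb1'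
            have e4 : a z < ((k : ℝ) + 1) * (4 * ε) := (div_lt_iff₀ h4ε).mp hb2'
            rw [abs_lt]
            constructor <;> nlinarith
          have := keyB x hx z hzX haz
          have := abs_lt.mp this
          linarith
        linarith
    exact Set.mem_biUnion (Finset.mem_range.mpr (Nat.lt_succ_of_le hkK)) hmem
  calc MeasureTheory.volume X
      ≤ MeasureTheory.volume (⋃ k ∈ Finset.range (K + 1), Icc (c k) (c k + ε)) :=
        measure_mono hcover
    _ ≤ ∑ k ∈ Finset.range (K + 1), MeasureTheory.volume (Icc (c k) (c k + ε)) :=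
        measure_biUnion_finset_le _ _
    _ = (K + 1) * ENNReal.ofReal ε := by
        simp [Real.volume_Icc, Finset.sum_const, nsmul_eq_mul]
    _ = ENNReal.ofReal ((K + 1) * ε) := by
        rw [ENNReal.ofReal_mul (by positivity)]
        congr 1
        rw [ENNReal.ofReal_add (Nat.cast_nonneg K) zero_le_one, ENNReal.ofReal_natCast,
          ENNReal.ofReal_one]
    _ ≤ ENNReal.ofReal (1 / 4 + ε) := by
        apply ENNReal.ofReal_le_ofReal
        have hKle : (K : ℝ) ≤ 1 / (4 * ε) := Nat.floor_le (by positivity)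
        have : (K : ℝ) * ε ≤ 1 / 4 := by
          have h := mul_le_mul_of_nonneg_right hKle hε.le
          have he : 1 / (4 * ε) * ε = 1 / 4 := by field_simp
          linarith
        push_cast
        linarith
end
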